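/- arXiv:2507.05490 — 5 statements merged into one kernel-verified Lean document; each statement's English description precedes it below -/
import Mathlib

section
/- Consider a simple bail process M(t) = G(t) − Σ_{j : a_j ≤ t} b_j, where G is nondecreasing and continuous at each arrival time a_j (a strictly increasing sequence of positive reals with finitely many a_j in each bounded interval), and b_j > 0. Let M*(t) = φ[M](t) be the Skorokhod map output. Then the running infimum I(t) := inf_{s ≤ t} min(0, M(s)) is constant on every interval not containing an arrival time, and it strictly decreases at an arrival time a_j if and only if M*(a_j−) < b_j. -/
/-!
Between two arrivals the bail process `M = G - Σ b_j 1{a_j ≤ ·}` is nondecreasing, so the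
running infimum of `min 0 M` cannot move there. At an arrival `a_j` the continuity of `G`
makes `M` jump down by exactly `b_j`, so `I(a_j) = min (I(a_j-)) (min 0 (M(a_j)))` with
`M(a_j) = M(a_j-) - b_j = M*(a_j-) + I(a_j-) - b_j`. Since `I(a_j-) ≤ 0`, this lies below
`I(a_j-)` exactly when `M*(a_j-) < b_j`.
-/

open Filter Set

/-- Running infimum `I(t) = inf_{s ≤ t} min(0, M(s))`. -/
noncomputable def runInf (M : ℝ → ℝ) (t : ℝ) : ℝ :=
  sInf ((fun s => min 0 (M s)) '' Set.Icc 0 t)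

theorem min_min_lt_self_iff {α : Type*} [LinearOrder α] {I z x : α} (hI : I ≤ z) :
    min I (min z x) < I ↔ x < I := by
  rw [min_lt_iff, min_lt_iff, or_iff_right (lt_irrefl I), or_iff_right hI.not_gt]

section RunInf

variable {M : ℝ → ℝ}

theorem runInf_nonpos {t : ℝ} (ht : 0 ≤ t)
    (hbdd : BddBelow ((fun s => min 0 (M s)) '' Icc 0 t)) : runInf M t ≤ 0 :=
  (csInf_le hbdd ⟨t, ⟨ht, le_rfl⟩, rfl⟩).trans (min_le_left _ _)

theorem sInf_image_eq_runInf {T : Set ℝ} {t : ℝ} (ht : 0 ≤ t) (hsub : Icc 0 t ⊆ T)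
    (hT : T ⊆ Ici 0) (hbdd : BddBelow ((fun s => min 0 (M s)) '' T))
    (hge : ∀ s ∈ T, t < s → M t ≤ M s) :
    sInf ((fun s => min 0 (M s)) '' T) = runInf M t := by
  have hbdd' := hbdd.mono (image_mono hsub)
  have hne := (nonempty_Icc.2 ht).image fun s => min 0 (M s)
  refine le_antisymm (csInf_le_csInf hbdd hne (image_mono hsub)) ?_
  refine le_csInf (hne.mono (image_mono hsub)) ?_
  rintro _ ⟨s, hs, rfl⟩
  rcases le_or_gt s t with hst | hts
  · exact csInf_le hbdd' ⟨s, ⟨hT hs, hst⟩, rfl⟩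
  · exact (csInf_le hbdd' ⟨t, ⟨ht, le_rfl⟩, rfl⟩).trans (min_le_min_left 0 (hge s hs hts))

theorem runInf_eq_of_monotoneOn {t₁ t₂ : ℝ} (ht₁ : 0 ≤ t₁) (h₁₂ : t₁ ≤ t₂)
    (hbdd : BddBelow ((fun s => min 0 (M s)) '' Icc 0 t₂)) (hM : MonotoneOn M (Icc t₁ t₂)) :
    runInf M t₂ = runInf M t₁ :=
  sInf_image_eq_runInf ht₁ (Icc_subset_Icc_right h₁₂) (fun _ hs => hs.1) hbdd
    fun _ hs hts => hM ⟨le_rfl, h₁₂⟩ ⟨hts.le, hs.2⟩ hts.le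

theorem runInf_eq_min_of_monotoneOn {c t : ℝ} (hc : 0 ≤ c) (hct : c < t)
    (hbdd : BddBelow ((fun s => min 0 (M s)) '' Icc 0 t)) (hM : MonotoneOn M (Ico c t)) :
    runInf M t = min (runInf M c) (min 0 (M t)) := by
  have hbdd' := hbdd.mono (image_mono Ico_subset_Icc_self)
  have hne := (nonempty_Ico.2 (hc.trans_lt hct)).image fun s => min 0 (M s)
  unfold runInf
  rw [← Ico_union_right (hc.trans hct.le), image_union, image_singleton,
    csInf_union hbdd' hne bddBelow_singleton (singleton_nonempty _), csInf_singleton,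
    sInf_image_eq_runInf hc (Icc_subset_Ico_right hct) (fun _ hs => hs.1) hbdd'
      fun _ hs hcs => hM ⟨le_rfl, hct⟩ ⟨hcs.le, hs.2⟩ hcs.le, runInf]

theorem Monotone.monotoneOn_sub_of_eqOn_const {G S : ℝ → ℝ} (hG : Monotone G) {s : Set ℝ}
    {C : ℝ} (hS : ∀ u ∈ s, S u = C) : MonotoneOn (fun t => G t - S t) s :=
  fun x hx y hy hxy => by simp only [hS x hx, hS y hy]; exact sub_le_sub_right (hG hxy) _

theorem bddBelow_min_image_Icc_sub {G S : ℝ → ℝ} (hG : Monotone G) (hS : Monotone S)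
    (t : ℝ) : BddBelow ((fun s => min 0 (G s - S s)) '' Icc 0 t) :=
  ⟨min 0 (G 0 - S t), by
    rintro _ ⟨s, hs, rfl⟩
    exact min_le_min_left 0 (sub_le_sub (hG hs.1) (hS hs.2))⟩

end RunInf

section Arrivals

variable (a b : ℕ → ℝ)

noncomputable def arrivalSum (t : ℝ) : ℝ :=
  ∑' k, if a k ≤ t then b k else 0

variable {a b}

theorem summable_arrivalSum (hainf : Tendsto a atTop atTop) (t : ℝ) :
    Summable fun k => if a k ≤ t then b k else 0 := by
  obtain ⟨N, hN⟩ := eventually_atTop.1 (hainf.eventually_gt_atTop t)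
  refine summable_of_ne_finset_zero (s := Finset.range N) fun k hk => if_neg ?_
  exact (hN k (not_lt.1 fun h => hk (Finset.mem_range.2 h))).not_ge

theorem monotone_arrivalSum (hainf : Tendsto a atTop atTop) (hb : ∀ k, 0 ≤ b k) :
    Monotone (arrivalSum a b) := fun s t hst =>
  (summable_arrivalSum hainf s).tsum_le_tsum (fun k => by
    split_ifs with hs ht
    exacts [le_rfl, absurd (hs.trans hst) ht, hb k, le_rfl]) (summable_arrivalSum hainf t)

theorem arrivalSum_eq_sum_range {t : ℝ} {j : ℕ} (h : ∀ k, a k ≤ t ↔ k < j) :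
    arrivalSum a b t = ∑ k ∈ Finset.range j, b k := by
  simp only [arrivalSum, h]
  rw [tsum_eq_sum (s := Finset.range j) fun k hk => if_neg (by simpa using hk)]
  exact Finset.sum_congr rfl fun k hk => if_pos (Finset.mem_range.1 hk)

theorem arrivalSum_eq_of_no_arrival {s t : ℝ} (hst : s ≤ t)
    (hno : ∀ k, ¬(s < a k ∧ a k ≤ t)) : arrivalSum a b t = arrivalSum a b s :=
  tsum_congr fun k => if_congr
    ⟨fun hkt => not_lt.1 fun hsk => hno k ⟨hsk, hkt⟩, fun hks => hks.trans hst⟩ rfl rfl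

theorem exists_gap_before_arrival (ha : StrictMono a) (hapos : ∀ j, 0 < a j) (j : ℕ) :
    ∃ c, 0 ≤ c ∧ c < a j ∧ ∀ t ∈ Ico c (a j), ∀ k, a k ≤ t ↔ k < j := by
  cases j with
  | zero =>
    refine ⟨0, le_rfl, hapos 0, fun t ht k => iff_of_false ?_ (Nat.not_lt_zero k)⟩
    exact fun hk => (ha.monotone (Nat.zero_le k)).not_gt (hk.trans_lt ht.2)
  | succ n =>
    refine ⟨a n, (hapos n).le, ha n.lt_succ_self, fun t ht k => ⟨fun hk => ?_, fun hk => ?_⟩⟩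
    exacts [ha.lt_iff_lt.1 (hk.trans_lt ht.2), (ha.monotone (Nat.lt_succ_iff.1 hk)).trans ht.1]

variable {G : ℝ → ℝ}

theorem monotoneOn_sub_arrivalSum_of_no_arrival (hG : Monotone G) {t₁ t₂ : ℝ}
    (hno : ∀ k, ¬(t₁ < a k ∧ a k ≤ t₂)) :
    MonotoneOn (fun t => G t - arrivalSum a b t) (Icc t₁ t₂) :=
  hG.monotoneOn_sub_of_eqOn_const fun _ hu =>
    arrivalSum_eq_of_no_arrival hu.1 fun k hk => hno k ⟨hk.1, hk.2.trans hu.2⟩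

end Arrivals

theorem runInf_constant_and_decrease_iff_general
    (G : ℝ → ℝ) (a b : ℕ → ℝ) (M : ℝ → ℝ)
    (hGmono : Monotone G)
    (ha : StrictMono a) (hapos : ∀ j, 0 < a j)
    (hainf : Tendsto a atTop atTop)
    (hGa : ∀ j, ContinuousAt G (a j))
    (hb : ∀ j, 0 < b j)
    (hM : ∀ t, M t = G t - ∑' j, if a j ≤ t then b j else 0)
    -- left limits of the reflected process and of the running infimum at the arrivals
    (Mstarleft Ileft : ℕ → ℝ)
    (hMstarleft : ∀ j, Tendsto (fun t => M t - runInf M t)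
      (nhdsWithin (a j) (Set.Iio (a j))) (nhds (Mstarleft j)))
    (hIleft : ∀ j, Tendsto (runInf M)
      (nhdsWithin (a j) (Set.Iio (a j))) (nhds (Ileft j))) :
    (∀ t₁ t₂, 0 ≤ t₁ → t₁ ≤ t₂ → (∀ j, ¬ (t₁ < a j ∧ a j ≤ t₂)) →
        runInf M t₁ = runInf M t₂) ∧
    (∀ j, runInf M (a j) < Ileft j ↔ Mstarleft j < b j) := by
  obtain rfl : M = fun t => G t - arrivalSum a b t := funext hM
  set M : ℝ → ℝ := fun t => G t - arrivalSum a b t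
  have hbdd := bddBelow_min_image_Icc_sub hGmono (monotone_arrivalSum hainf fun k => (hb k).le)
  refine ⟨fun t₁ t₂ ht₁ h₁₂ hno => (runInf_eq_of_monotoneOn ht₁ h₁₂ (hbdd t₂)
    (monotoneOn_sub_arrivalSum_of_no_arrival hGmono hno)).symm, fun j => ?_⟩
  obtain ⟨c, hc, hcj, hgap⟩ := exists_gap_before_arrival ha hapos j
  have hS : ∀ t ∈ Ico c (a j), arrivalSum a b t = ∑ k ∈ Finset.range j, b k :=
    fun t ht => arrivalSum_eq_sum_range (hgap t ht)
  have hmono : MonotoneOn M (Ico c (a j)) := hGmono.monotoneOn_sub_of_eqOn_const hS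
  have hI : ∀ t ∈ Ico c (a j), runInf M t = runInf M c := fun t ht =>
    runInf_eq_of_monotoneOn hc ht.1 (hbdd t) (hmono.mono (Icc_subset_Ico_right ht.2))
  have hlim := Ico_mem_nhdsLT hcj
  have hIl : Ileft j = runInf M c := tendsto_nhds_unique (hIleft j)
    (tendsto_const_nhds.congr' (eventually_of_mem hlim fun t ht => (hI t ht).symm))
  have hMl : Mstarleft j = G (a j) - ∑ k ∈ Finset.range j, b k - runInf M c :=
    tendsto_nhds_unique (hMstarleft j) <|
      (((hGa j).tendsto.mono_left nhdsWithin_le_nhds).sub_const _).sub_const _ |>.congr'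
        (eventually_of_mem hlim fun t ht => by
          show _ = G t - arrivalSum a b t - runInf M t
          rw [hS t ht, hI t ht])
  have hSj : arrivalSum a b (a j) = ∑ k ∈ Finset.range (j + 1), b k :=
    arrivalSum_eq_sum_range fun k => by rw [ha.le_iff_le, Nat.lt_succ_iff]
  have hI0 := runInf_nonpos hc (hbdd c)
  rw [hIl, hMl, runInf_eq_min_of_monotoneOn hc hcj (hbdd _) hmono, hSj, Finset.sum_range_succ,
    min_min_lt_self_iff hI0]
  constructor <;> intro h <;> linarith

/-- For a simple bail process `M(t) = G(t) − Σ_{a_j ≤ t} b_j`, the running infimum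
`I(t) = inf_{s ≤ t} min(0, M(s))` is constant on every interval containing no arrival
time, and it strictly decreases at an arrival `a_j` iff `M*(a_j−) < b_j`, where
`M* = φ[M]` is the Skorokhod reflection. -/
theorem runInf_constant_and_decrease_iff
    (G : ℝ → ℝ) (a b : ℕ → ℝ) (M : ℝ → ℝ)
    (hGmono : Monotone G) (hG0 : 0 ≤ G 0)
    (hGright : ∀ t, ContinuousWithinAt G (Set.Ici t) t)
    (ha : StrictMono a) (hapos : ∀ j, 0 < a j)
    (hainf : Tendsto a atTop atTop)
    (hGa : ∀ j, ContinuousAt G (a j))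
    (hb : ∀ j, 0 < b j)
    (hM : ∀ t, M t = G t - ∑' j, if a j ≤ t then b j else 0)
    -- left limits of the reflected process and of the running infimum at the arrivals
    (Mstarleft Ileft : ℕ → ℝ)
    (hMstarleft : ∀ j, Tendsto (fun t => M t - runInf M t)
      (nhdsWithin (a j) (Set.Iio (a j))) (nhds (Mstarleft j)))
    (hIleft : ∀ j, Tendsto (runInf M)
      (nhdsWithin (a j) (Set.Iio (a j))) (nhds (Ileft j))) :
    (∀ t₁ t₂, 0 ≤ t₁ → t₁ ≤ t₂ → (∀ j, ¬ (t₁ < a j ∧ a j ≤ t₂)) →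
        runInf M t₁ = runInf M t₂) ∧
    (∀ j, runInf M (a j) < Ileft j ↔ Mstarleft j < b j) :=
  runInf_constant_and_decrease_iff_general G a b M hGmono ha hapos hainf hGa hb hM Mstarleft Ileft
    hMstarleft hIleft
end

section
/- Under the setting of the simple bail process, at each arrival time a_j where the running infimum I(t) = inf_{s ≤ t} min(0, M(s)) decreases, the size of the decrease equals b_j − M*(a_j−); that is, I(a_j+) − I(a_j−) = M*(a_j−) − b_j whenever M*(a_j−) < b_j. -/
/-!
Before the arrival `a j` the bail total is eventually constant, while `G` is continuous at `a j`;
hence `M (a j) = M (a j -) - b j`. The left limit of `I` at `a j` is the infimum of `min 0 M`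
over `[0, a j)`, and `M (a j -) = M* (a j -) + I (a j -)`. So when `M* (a j -) < b j` the new
value `M (a j)` lies below every earlier value of `min 0 M`, and `I (a j) = M (a j)`.
As `I` is right-continuous, `I (a j +)` is `runInf M (a j)`.
-/

open Filter Set Topology

section RunningInfimum

variable {M : ℝ → ℝ} {t : ℝ}

lemma bddBelow_image_min_zero {s : Set ℝ} (hM : BddBelow (M '' s)) :
    BddBelow ((fun u => min 0 (M u)) '' s) := by
  obtain ⟨m, hm⟩ := hM
  exact ⟨min 0 m, by rintro _ ⟨u, hu, rfl⟩; exact min_le_min_left 0 (hm ⟨u, hu, rfl⟩)⟩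

lemma tendsto_runInf_nhdsLT (ht : 0 < t) (hM : BddBelow (M '' Icc 0 t)) :
    Tendsto (runInf M) (𝓝[<] t) (𝓝 (sInf ((fun u => min 0 (M u)) '' Ico 0 t))) := by
  have hbdd : BddBelow ((fun u => min 0 (M u)) '' Ico 0 t) :=
    bddBelow_image_min_zero (hM.mono (image_mono Ico_subset_Icc_self))
  refine tendsto_order.2 ⟨fun c hc => ?_, fun c hc => ?_⟩
  · filter_upwards [Ico_mem_nhdsLT_of_mem (⟨ht, le_rfl⟩ : t ∈ Ioc 0 t)] with s hs
    refine hc.trans_le (csInf_le_csInf hbdd ((nonempty_Icc.2 hs.1).image _) ?_)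
    exact image_mono (Icc_subset_Ico_right hs.2)
  · obtain ⟨_, ⟨u, hu, rfl⟩, huc⟩ := exists_lt_of_csInf_lt ((nonempty_Ico.2 ht).image _) hc
    filter_upwards [Ico_mem_nhdsLT_of_mem (⟨hu.2, le_rfl⟩ : t ∈ Ioc u t)] with s hs
    have hbdd_s : BddBelow ((fun u => min 0 (M u)) '' Icc 0 s) :=
      bddBelow_image_min_zero (hM.mono (image_mono (Icc_subset_Icc_right hs.2.le)))
    exact (csInf_le hbdd_s ⟨u, ⟨hu.1, hs.1⟩, rfl⟩).trans_lt huc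

lemma runInf_eq_min_sInf_Ico (ht : 0 < t) (hM : BddBelow (M '' Icc 0 t)) :
    runInf M t = min (min 0 (M t)) (sInf ((fun u => min 0 (M u)) '' Ico 0 t)) := by
  rw [runInf, ← Ico_insert_right ht.le, image_insert_eq,
    csInf_insert (bddBelow_image_min_zero (hM.mono (image_mono Ico_subset_Icc_self)))
      ((nonempty_Ico.2 ht).image _)]

lemma runInf_eq_self_of_le_leftLim {I : ℝ} (ht : 0 < t) (hM : BddBelow (M '' Icc 0 t))
    (hI : Tendsto (runInf M) (𝓝[<] t) (𝓝 I)) (hle : M t ≤ I) : runInf M t = M t := by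
  have hIeq := tendsto_nhds_unique hI (tendsto_runInf_nhdsLT ht hM)
  have hI0 : I ≤ 0 := by
    rw [hIeq]
    refine (csInf_le ?_ (mem_image_of_mem _ (left_mem_Ico.2 ht))).trans (min_le_left _ (M 0))
    exact bddBelow_image_min_zero (hM.mono (image_mono Ico_subset_Icc_self))
  rw [runInf_eq_min_sInf_Ico ht hM, ← hIeq, min_eq_right (hle.trans hI0), min_eq_left hle]

end RunningInfimum

section BailProcess

variable {a b : ℕ → ℝ}

noncomputable def totalBail (a b : ℕ → ℝ) (t : ℝ) : ℝ :=
  ∑' j, if a j ≤ t then b j else 0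

lemma summable_totalBail (ha : Tendsto a atTop atTop) (t : ℝ) :
    Summable fun j => if a j ≤ t then b j else 0 := by
  obtain ⟨N, hN⟩ := eventually_atTop.1 (ha.eventually_gt_atTop t)
  refine summable_of_ne_finset_zero (s := Finset.range N) fun k hk => ?_
  rw [if_neg (hN k (by simpa using hk)).not_ge]

lemma totalBail_mono (ha : Tendsto a atTop atTop) (hb : ∀ j, 0 ≤ b j) :
    Monotone (totalBail a b) := by
  intro s t hst
  refine (summable_totalBail ha s).tsum_le_tsum (fun k => ?_) (summable_totalBail ha t)
  by_cases hs : a k ≤ s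
  · simp [hs, hs.trans hst]
  · rw [if_neg hs]
    split_ifs
    exacts [hb k, le_rfl]

lemma totalBail_eq_sum_range {t : ℝ} {n : ℕ} (h : ∀ k, a k ≤ t ↔ k < n) :
    totalBail a b t = ∑ k ∈ Finset.range n, b k := by
  rw [totalBail, tsum_eq_sum (s := Finset.range n)
    fun k hk => if_neg fun hkt => hk (Finset.mem_range.2 ((h k).1 hkt))]
  exact Finset.sum_congr rfl fun k hk => if_pos ((h k).2 (Finset.mem_range.1 hk))

lemma eventually_totalBail_nhdsLT (ha : StrictMono a) (j : ℕ) :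
    ∀ᶠ t in 𝓝[<] a j, totalBail a b t = totalBail a b (a j) - b j := by
  have hbefore : ∀ᶠ t in 𝓝[<] a j, ∀ k ∈ Finset.range j, a k < t :=
    (eventually_all_finset _).2 fun k hk =>
      nhdsWithin_le_nhds (eventually_gt_nhds (ha (Finset.mem_range.1 hk)))
  filter_upwards [self_mem_nhdsWithin, hbefore] with t (hlt : t < a j) hbefore
  have hcount : ∀ k, a k ≤ t ↔ k < j := fun k =>
    ⟨fun hk => lt_of_not_ge fun hjk => (hk.trans_lt hlt).not_ge (ha.monotone hjk),
      fun hk => (hbefore k (Finset.mem_range.2 hk)).le⟩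
  rw [totalBail_eq_sum_range hcount,
    totalBail_eq_sum_range (n := j + 1) fun k => ha.le_iff_le.trans Nat.lt_succ_iff.symm,
    Finset.sum_range_succ, add_sub_cancel_right]

variable {G M : ℝ → ℝ} (hM : ∀ t, M t = G t - totalBail a b t)
include hM

lemma bddBelow_image_Icc_of_bail (hG : Monotone G) (ha : Tendsto a atTop atTop)
    (hb : ∀ j, 0 ≤ b j) (s t : ℝ) : BddBelow (M '' Icc s t) := by
  refine ⟨G s - totalBail a b t, ?_⟩
  rintro _ ⟨u, hu, rfl⟩
  rw [hM]
  exact sub_le_sub (hG hu.1) (totalBail_mono ha hb hu.2)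

lemma tendsto_nhdsLT_arrival (ha : StrictMono a) (j : ℕ) (hG : ContinuousAt G (a j)) :
    Tendsto M (𝓝[<] a j) (𝓝 (M (a j) + b j)) := by
  have hbail : Tendsto (totalBail a b) (𝓝[<] a j) (𝓝 (totalBail a b (a j) - b j)) :=
    tendsto_const_nhds.congr' (EventuallyEq.symm (eventually_totalBail_nhdsLT ha j))
  rw [hM, sub_add, funext hM]
  exact (hG.tendsto.mono_left nhdsWithin_le_nhds).sub hbail

end BailProcess

theorem runInf_jump_size_general
    (G : ℝ → ℝ) (a b : ℕ → ℝ) (M : ℝ → ℝ)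
    (hGmono : Monotone G)
    (ha : StrictMono a) (hapos : ∀ j, 0 < a j)
    (hainf : Tendsto a atTop atTop)
    (hGa : ∀ j, ContinuousAt G (a j))
    (hb : ∀ j, 0 < b j)
    (hM : ∀ t, M t = G t - ∑' j, if a j ≤ t then b j else 0)
    (Mstarleft Ileft : ℕ → ℝ)
    (hMstarleft : ∀ j, Tendsto (fun t => M t - runInf M t)
      (nhdsWithin (a j) (Set.Iio (a j))) (nhds (Mstarleft j)))
    (hIleft : ∀ j, Tendsto (runInf M)
      (nhdsWithin (a j) (Set.Iio (a j))) (nhds (Ileft j))) :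
    ∀ j, Mstarleft j < b j →
      runInf M (a j) - Ileft j = Mstarleft j - b j := by
  intro j hj
  have hMleft : Tendsto M (𝓝[<] a j) (𝓝 (Mstarleft j + Ileft j)) :=
    ((hMstarleft j).add (hIleft j)).congr fun t => sub_add_cancel _ _
  have hjump : M (a j) + b j = Mstarleft j + Ileft j :=
    tendsto_nhds_unique (tendsto_nhdsLT_arrival hM ha j (hGa j)) hMleft
  have hbdd := bddBelow_image_Icc_of_bail hM hGmono hainf (fun j => (hb j).le) 0 (a j)
  rw [runInf_eq_self_of_le_leftLim (hapos j) hbdd (hIleft j) (by linarith)]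
  linarith

/-- In the simple bail process setting, whenever the running infimum decreases at an
arrival time `a_j` (i.e. `M*(a_j−) < b_j`), the size of the decrease is exactly
`b_j − M*(a_j−)`: `I(a_j+) − I(a_j−) = M*(a_j−) − b_j`.  (Here `I` is right-continuous,
so `I(a_j+) = I(a_j)`.) -/
theorem runInf_jump_size
    (G : ℝ → ℝ) (a b : ℕ → ℝ) (M : ℝ → ℝ)
    (hGmono : Monotone G) (hG0 : 0 ≤ G 0)
    (hGright : ∀ t, ContinuousWithinAt G (Set.Ici t) t)
    (ha : StrictMono a) (hapos : ∀ j, 0 < a j)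
    (hainf : Tendsto a atTop atTop)
    (hGa : ∀ j, ContinuousAt G (a j))
    (hb : ∀ j, 0 < b j)
    (hM : ∀ t, M t = G t - ∑' j, if a j ≤ t then b j else 0)
    (Mstarleft Ileft : ℕ → ℝ)
    (hMstarleft : ∀ j, Tendsto (fun t => M t - runInf M t)
      (nhdsWithin (a j) (Set.Iio (a j))) (nhds (Mstarleft j)))
    (hIleft : ∀ j, Tendsto (runInf M)
      (nhdsWithin (a j) (Set.Iio (a j))) (nhds (Ileft j))) :
    ∀ j, Mstarleft j < b j →
      runInf M (a j) - Ileft j = Mstarleft j - b j :=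
  runInf_jump_size_general G a b M hGmono ha hapos hainf hGa hb hM Mstarleft Ileft hMstarleft hIleft
end

section
/- (Skorokhod map yields partial fulfillment.) Let M(t) = G(t) − Σ_{j : a_j ≤ t} b_j be a simple bail process with G nondecreasing càdlàg and continuous at every arrival time a_j, and let M* = φ[M] be its Skorokhod reflection. Then for all t ≥ 0, M*(t) = G(t) − Σ_{j : a_j ≤ t} min(b_j, M*(a_j−)). -/
open Filter Set

/-- The Skorokhod map `φ[P](t) = P(t) − inf_{s ≤ t} min(0, P(s))`. -/
noncomputable def skorokhod (P : ℝ → ℝ) (t : ℝ) : ℝ :=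
  P t - sInf ((fun s => min 0 (P s)) '' Set.Icc 0 t)

/-- The running-infimum level after `n` arrivals. -/
noncomputable def infLevel (M : ℝ → ℝ) (a : ℕ → ℝ) : ℕ → ℝ
  | 0 => 0
  | n+1 => min (infLevel M a n) (min 0 (M (a n)))

/-- (Skorokhod map yields partial fulfillment.) For a simple bail process
`M(t) = G(t) − Σ_{a_j ≤ t} b_j`, the Skorokhod reflection `M* = φ[M]` satisfies
`M*(t) = G(t) − Σ_{a_j ≤ t} min(b_j, M*(a_j−))` for all `t ≥ 0`. -/
theorem skorokhod_partial_fulfillment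
    (G : ℝ → ℝ) (a b : ℕ → ℝ) (M : ℝ → ℝ)
    (hGmono : Monotone G) (hG0 : 0 ≤ G 0)
    (hGright : ∀ t, ContinuousWithinAt G (Set.Ici t) t)
    (ha : StrictMono a) (hapos : ∀ j, 0 < a j)
    (hainf : Tendsto a atTop atTop)
    (hGa : ∀ j, ContinuousAt G (a j))
    (hb : ∀ j, 0 < b j)
    (hM : ∀ t, M t = G t - ∑' j, if a j ≤ t then b j else 0)
    (Mstarleft : ℕ → ℝ)
    (hMstarleft : ∀ j, Tendsto (skorokhod M)
      (nhdsWithin (a j) (Set.Iio (a j))) (nhds (Mstarleft j))) :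
    ∀ t, 0 ≤ t →
      skorokhod M t = G t - ∑' j, if a j ≤ t then min (b j) (Mstarleft j) else 0 := by
  classical
  -- there is always an arrival beyond any time
  have hex : ∀ t : ℝ, ∃ j, t < a j := fun t =>
    (hainf.eventually (eventually_gt_atTop t)).exists
  -- number of arrivals up to time t
  set nt : ℝ → ℕ := fun t => Nat.find (hex t) with hntdef
  have hnt_lt : ∀ t j, a j ≤ t ↔ j < nt t := by
    intro t j
    constructor
    · intro h
      by_contra hc
      push_neg at hc
      have h1 : a (nt t) ≤ a j := ha.monotone hc
      have h2 : t < a (nt t) := Nat.find_spec (hex t)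
      linarith
    · intro h
      have := Nat.find_min (hex t) h
      exact le_of_not_gt this
  have hnt_mono : ∀ ⦃s t : ℝ⦄, s ≤ t → nt s ≤ nt t := by
    intro s t hst
    by_contra hc
    push_neg at hc
    have : a (nt t) ≤ s := (hnt_lt s (nt t)).2 hc
    have : a (nt t) ≤ t := this.trans hst
    exact lt_irrefl _ ((hnt_lt t (nt t)).1 this)
  -- finite-sum representation of the tsums
  have hsum : ∀ (t : ℝ) (c : ℕ → ℝ),
      (∑' j, if a j ≤ t then c j else 0) = ∑ j ∈ Finset.range (nt t), c j := by
    intro t c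
    rw [tsum_eq_sum (s := Finset.range (nt t)) ?h]
    · apply Finset.sum_congr rfl
      intro j hj
      rw [if_pos ((hnt_lt t j).2 (Finset.mem_range.1 hj))]
    · intro j hj
      rw [if_neg]
      intro h
      exact hj (Finset.mem_range.2 ((hnt_lt t j).1 h))
  set S : ℕ → ℝ := fun n => ∑ j ∈ Finset.range n, b j with hSdef
  set T : ℕ → ℝ := fun n => ∑ j ∈ Finset.range n, min (b j) (Mstarleft j) with hTdef
  set L : ℕ → ℝ := infLevel M a with hLdef
  have hL0 : L 0 = 0 := rfl
  have hLsucc : ∀ n, L (n + 1) = min (L n) (min 0 (M (a n))) := fun n => rfl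
  have hM' : ∀ s, M s = G s - S (nt s) := by
    intro s
    rw [hM s, hsum s b]
  have hnt_a : ∀ j, nt (a j) = j + 1 := by
    intro j
    have h1 : j < nt (a j) := (hnt_lt (a j) j).1 le_rfl
    have h2 : ¬ (j + 1 < nt (a j)) := by
      intro h
      have := (hnt_lt (a j) (j + 1)).2 h
      exact absurd this (not_le.2 (ha (Nat.lt_succ_self j)))
    omega
  have hMa : ∀ j, M (a j) = G (a j) - S (j + 1) := by
    intro j
    rw [hM' (a j), hnt_a j]
  have hnt0 : ∀ s : ℝ, s < a 0 → nt s = 0 := by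
    intro s hs
    by_contra hc
    have : a 0 ≤ s := (hnt_lt s 0).2 (Nat.pos_of_ne_zero hc)
    linarith
  -- basic properties of L
  have hLnonpos : ∀ n, L n ≤ 0 := by
    intro n
    induction n with
    | zero => simp [hL0]
    | succ k ih => rw [hLsucc k]; exact le_trans (min_le_left _ _) ih
  have hLanti' : ∀ ⦃m n : ℕ⦄, m ≤ n → L n ≤ L m := by
    intro m n h
    induction h with
    | refl => exact le_rfl
    | step h ih => exact le_trans (by rw [hLsucc]; exact min_le_left _ _) ih
  -- lower bound for the infimum
  have hlow : ∀ s : ℝ, 0 ≤ s → L (nt s) ≤ min 0 (M s) := by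
    intro s hs
    rcases Nat.eq_zero_or_eq_succ_pred (nt s) with h0 | h1
    · rw [h0, hL0]
      have : M s = G s := by
        rw [hM' s, h0]; simp [hSdef]
      rw [this]
      exact le_min le_rfl (le_trans hG0 (hGmono hs))
    · set k := (nt s) - 1 with hk
      have hks : nt s = k + 1 := h1
      have haks : a k ≤ s := (hnt_lt s k).2 (by omega)
      have hMs : M (a k) ≤ M s := by
        rw [hM' s, hks, hMa k]
        have := hGmono haks
        linarith
      calc L (nt s) = min (L k) (min 0 (M (a k))) := by rw [hks, hLsucc]
        _ ≤ min 0 (M (a k)) := min_le_right _ _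
        _ ≤ min 0 (M s) := min_le_min le_rfl hMs
  -- L is attained
  have hLmem : ∀ n, L n = 0 ∨ ∃ j, j < n ∧ L n = min 0 (M (a j)) := by
    intro n
    induction n with
    | zero => exact Or.inl hL0
    | succ k ih =>
      rw [hLsucc k]
      rcases le_total (L k) (min 0 (M (a k))) with h | h
      · rw [min_eq_left h]
        rcases ih with h' | ⟨j, hj, hj'⟩
        · exact Or.inl h'
        · exact Or.inr ⟨j, by omega, hj'⟩
      · rw [min_eq_right h]
        exact Or.inr ⟨k, Nat.lt_succ_self k, rfl⟩
  have hM0 : ∀ s : ℝ, 0 ≤ s → s < a 0 → min 0 (M s) = 0 := by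
    intro s hs hs'
    have : M s = G s := by rw [hM' s, hnt0 s hs']; simp [hSdef]
    rw [this, min_eq_left (le_trans hG0 (hGmono hs))]
  -- the infimum equals L (nt t)
  have hInf : ∀ t : ℝ, 0 ≤ t →
      sInf ((fun s => min 0 (M s)) '' Set.Icc 0 t) = L (nt t) := by
    intro t ht
    have hlb : ∀ x ∈ (fun s => min 0 (M s)) '' Set.Icc 0 t, L (nt t) ≤ x := by
      rintro x ⟨s, ⟨hs0, hst⟩, rfl⟩
      exact le_trans (hLanti' (hnt_mono hst)) (hlow s hs0)
    have hmem : L (nt t) ∈ (fun s => min 0 (M s)) '' Set.Icc 0 t := by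
      rcases hLmem (nt t) with h0 | ⟨j, hj, hj'⟩
      · refine ⟨0, ⟨le_rfl, ht⟩, ?_⟩
        show min 0 (M 0) = L (nt t)
        rw [hM0 0 le_rfl (hapos 0), h0]
      · refine ⟨a j, ⟨(hapos j).le, (hnt_lt t j).2 hj⟩, hj'.symm⟩
    exact le_antisymm (csInf_le ⟨L (nt t), hlb⟩ hmem) (le_csInf ⟨_, hmem⟩ hlb)
  have hSkor : ∀ t : ℝ, 0 ≤ t → skorokhod M t = G t - S (nt t) - L (nt t) := by
    intro t ht
    rw [skorokhod, hInf t ht, hM' t]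
  -- identify the left limits
  have hW : ∀ j, Mstarleft j = G (a j) - S j - L j := by
    intro j
    have hcj : ∃ c : ℝ, 0 ≤ c ∧ c < a j ∧ ∀ s, c < s → s < a j → nt s = j := by
      cases j with
      | zero =>
        refine ⟨0, le_rfl, hapos 0, ?_⟩
        intro s hs hs'
        exact hnt0 s hs'
      | succ k =>
        refine ⟨a k, (hapos k).le, ha (Nat.lt_succ_self k), ?_⟩
        intro s hs hs'
        have h1 : k < nt s := (hnt_lt s k).1 hs.le
        have h2 : ¬ (k + 1 < nt s) := fun h => absurd ((hnt_lt s (k+1)).2 h) (not_le.2 hs')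
        omega
    obtain ⟨c, hc0, hcaj, hnts⟩ := hcj
    have hev : ∀ᶠ s in nhdsWithin (a j) (Set.Iio (a j)),
        skorokhod M s = G s - S j - L j := by
      filter_upwards [Ioo_mem_nhdsLT_of_mem (show a j ∈ Set.Ioc c (a j) from ⟨hcaj, le_rfl⟩)]
      rintro s ⟨hs1, hs2⟩
      rw [hSkor s (hc0.trans hs1.le), hnts s hs1 hs2]
    have htend : Tendsto (fun s => G s - S j - L j)
        (nhdsWithin (a j) (Set.Iio (a j))) (nhds (G (a j) - S j - L j)) :=
      (((hGa j).tendsto.mono_left nhdsWithin_le_nhds).sub tendsto_const_nhds).sub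
        tendsto_const_nhds
    exact tendsto_nhds_unique (hMstarleft j) (htend.congr' (hev.mono fun s h => h.symm))
  have hWpos : ∀ j, 0 ≤ Mstarleft j := by
    intro j
    rw [hW j]
    cases j with
    | zero =>
      have : G 0 ≤ G (a 0) := hGmono (hapos 0).le
      have hS0 : S 0 = 0 := by simp [hSdef]
      rw [hS0, hL0]
      linarith
    | succ k =>
      have h1 : L (k + 1) ≤ min 0 (M (a k)) := by rw [hLsucc]; exact min_le_right _ _
      have h2 : min 0 (M (a k)) ≤ M (a k) := min_le_right _ _
      have h3 : M (a k) = G (a k) - S (k + 1) := hMa k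
      have h4 : G (a k) ≤ G (a (k + 1)) := hGmono (ha (Nat.lt_succ_self k)).le
      linarith
  -- the key recursion
  have hLT : ∀ n, L n = T n - S n := by
    intro n
    induction n with
    | zero => simp [hL0, hSdef, hTdef]
    | succ k ih =>
      have hSk : S (k + 1) = S k + b k := Finset.sum_range_succ _ _
      have hTk : T (k + 1) = T k + min (b k) (Mstarleft k) := Finset.sum_range_succ _ _
      have hMak : M (a k) = Mstarleft k + L k - b k := by
        rw [hMa k, hW k, hSk]; ring
      rw [hLsucc k, hMak, hSk, hTk]
      have hW0 := hWpos k
      have hL0' := hLnonpos k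
      have hb0 := hb k
      rcases le_total (b k) (Mstarleft k) with h | h
      · have hle : L k ≤ min 0 (Mstarleft k + L k - b k) := by
          rcases le_total (0 : ℝ) (Mstarleft k + L k - b k) with h2 | h2
          · rw [min_eq_left h2]; linarith
          · rw [min_eq_right h2]; linarith
        rw [min_eq_left hle, min_eq_left h]
        linarith
      · have h2 : Mstarleft k + L k - b k ≤ 0 := by linarith
        have h3 : Mstarleft k + L k - b k ≤ L k := by linarith
        rw [min_eq_right h2, min_eq_right h3, min_eq_right h]
        linarith
  -- conclusion
  intro t ht
  rw [hSkor t ht, hsum t (fun j => min (b j) (Mstarleft j)), hLT (nt t)]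
  show G t - S (nt t) - (T (nt t) - S (nt t)) = G t - T (nt t)
  ring
end

section
/- (Partial fulfillment dominates infinite acceptance with returns.) Let M^{∞,R}(t) = M₀ + D(t) − Σ_{a_j ≤ t} b_j + Σ_j (1−p_j) b_j 𝟙{t > a_j + s_j} and let M^{P,R}(t) satisfy M^{P,R}(t) = M₀ + D(t) − Σ_{a_j ≤ t} min(b_j, M^{P,R}(a_j−)) + Σ_j (1−p_j) min(b_j, M^{P,R}(a_j−)) 𝟙{t > a_j + s_j}, with p_j ∈ [0,1], b_j > 0, s_j > 0. Then M^{P,R}(t) ≥ M^{∞,R}(t) for all t ≥ 0. -/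
open Filter Set

/-- (Partial fulfillment dominates infinite acceptance, with returns.) With
`M^{∞,R}(t) = M₀ + D(t) − Σ_{a_j ≤ t} b_j + Σ_j (1−p_j) b_j 𝟙{t > a_j + s_j}` and
`M^{P,R}` the partial-fulfillment process satisfying
`M^{P,R}(t) = M₀ + D(t) − Σ_{a_j ≤ t} min(b_j, M^{P,R}(a_j−))
  + Σ_j (1−p_j) min(b_j, M^{P,R}(a_j−)) 𝟙{t > a_j + s_j}`,
one has `M^{P,R}(t) ≥ M^{∞,R}(t)` for all `t ≥ 0`. -/
theorem partial_dominates_infinite_with_returns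
    (M₀ : ℝ) (D : ℝ → ℝ) (a b p s : ℕ → ℝ) (MinfR MPR : ℝ → ℝ) (MPRleft : ℕ → ℝ)
    (hM₀ : 0 ≤ M₀)
    (hDmono : Monotone D) (hD0 : D 0 = 0)
    (ha : StrictMono a) (hapos : ∀ j, 0 < a j)
    (hainf : Tendsto a atTop atTop)
    (hb : ∀ j, 0 < b j) (hp0 : ∀ j, 0 ≤ p j) (hp1 : ∀ j, p j ≤ 1)
    (hs : ∀ j, 0 < s j)
    (hMinfR : ∀ t, MinfR t = M₀ + D t - (∑' j, if a j ≤ t then b j else 0)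
      + ∑' j, if a j + s j < t then (1 - p j) * b j else 0)
    -- `MPRleft j` is the left limit of `MPR` at arrival `a_j`
    (hMPRleft : ∀ j, Tendsto MPR (nhdsWithin (a j) (Set.Iio (a j))) (nhds (MPRleft j)))
    (hMPR : ∀ t, MPR t = M₀ + D t
      - (∑' j, if a j ≤ t then min (b j) (MPRleft j) else 0)
      + ∑' j, if a j + s j < t then (1 - p j) * min (b j) (MPRleft j) else 0) :
    ∀ t, 0 ≤ t → MinfR t ≤ MPR t := by
  intro t ht
  -- finitely many arrivals up to time t
  obtain ⟨N, hN⟩ := (hainf.eventually_gt_atTop t).exists_forall_of_atTop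
  have hsupp : ∀ (f : ℕ → ℝ), (∀ j, a j > t → f j = 0) → Summable f := by
    intro f hf
    apply summable_of_ne_finset_zero (s := Finset.range N)
    intro j hj
    exact hf j (hN j (le_of_not_gt (fun h => hj (Finset.mem_range.mpr h))))
  have hmem : ∀ j, a j + s j < t → a j ≤ t := fun j h =>
    le_of_lt (lt_of_le_of_lt (le_add_of_nonneg_right (hs j).le) h)
  -- the four summands
  set f1 : ℕ → ℝ := fun j => if a j ≤ t then b j else 0 with hf1
  set f2 : ℕ → ℝ := fun j => if a j ≤ t then min (b j) (MPRleft j) else 0 with hf2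
  set g1 : ℕ → ℝ := fun j => if a j + s j < t then (1 - p j) * b j else 0 with hg1
  set g2 : ℕ → ℝ := fun j => if a j + s j < t then (1 - p j) * min (b j) (MPRleft j) else 0
    with hg2
  have hz : ∀ j, a j > t → ¬ (a j ≤ t) := fun j h => not_le.mpr h
  have hz' : ∀ j, a j > t → ¬ (a j + s j < t) := fun j h hc => hz j h (hmem j hc)
  have sf1 : Summable f1 := hsupp _ (fun j h => if_neg (hz j h))
  have sf2 : Summable f2 := hsupp _ (fun j h => if_neg (hz j h))
  have sg1 : Summable g1 := hsupp _ (fun j h => if_neg (hz' j h))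
  have sg2 : Summable g2 := hsupp _ (fun j h => if_neg (hz' j h))
  rw [hMinfR t, hMPR t]
  have key : (∑' j, g1 j) - (∑' j, g2 j) ≤ (∑' j, f1 j) - (∑' j, f2 j) := by
    rw [← Summable.tsum_sub sg1 sg2, ← Summable.tsum_sub sf1 sf2]
    apply Summable.tsum_le_tsum _ (sg1.sub sg2) (sf1.sub sf2)
    intro j
    simp only [Pi.sub_apply, hf1, hf2, hg1, hg2]
    have hc : 0 ≤ b j - min (b j) (MPRleft j) := sub_nonneg.mpr (min_le_left _ _)
    by_cases h1 : a j + s j < t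
    · rw [if_pos h1, if_pos h1, if_pos (hmem j h1), if_pos (hmem j h1)]
      rw [← mul_sub]
      calc (1 - p j) * (b j - min (b j) (MPRleft j))
          ≤ 1 * (b j - min (b j) (MPRleft j)) := by
            apply mul_le_mul_of_nonneg_right _ hc
            linarith [hp0 j]
        _ = _ := one_mul _
    · rw [if_neg h1, if_neg h1]
      by_cases h2 : a j ≤ t
      · rw [if_pos h2, if_pos h2]; linarith
      · rw [if_neg h2, if_neg h2]
  linarith
end

section
/- (Skorokhod approximation with full returns dominates realistic partial fulfillment.) Define M^{P*,R∞}(t) = M₀ + D(t) + Σ_j p_j b_j 𝟙{a_j + s_j ≤ t} − Σ_{a_j ≤ t} min(b_j, M^{P*,R∞}(a_j−)) and M^{P,R}(t) = M₀ + D(t) + Σ_j p_j min(b_j, M^{P,R}(a_j−)) 𝟙{a_j + s_j ≤ t} − Σ_{a_j ≤ t} min(b_j, M^{P,R}(a_j−)). Then M^{P*,R∞}(t) ≥ M^{P,R}(t) for all t ≥ 0. -/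
open Filter Set

lemma tsum_ite_eq_sum_range {f : ℕ → ℝ} {c : ℕ → Prop} [DecidablePred c] {N : ℕ}
    (h : ∀ j, c j → j < N) :
    ∑' j, (if c j then f j else 0) = ∑ j ∈ Finset.range N, if c j then f j else 0 := by
  refine tsum_eq_sum ?_
  intro j hj
  exact if_neg fun hc => hj (Finset.mem_range.2 (h j hc))

lemma left_limit_eq (M₀ : ℝ) (D : ℝ → ℝ) (a s q r : ℕ → ℝ) (F : ℝ → ℝ) (Fl : ℝ) (k : ℕ)
    (ha : StrictMono a) (hs : ∀ j, 0 < s j)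
    (hDa : ContinuousAt D (a k))
    (hF : ∀ t, F t = M₀ + D t + (∑' j, if a j + s j ≤ t then q j else 0)
      - ∑' j, if a j ≤ t then r j else 0)
    (hFl : Tendsto F (nhdsWithin (a k) (Set.Iio (a k))) (nhds Fl)) :
    Fl = M₀ + D (a k) + (∑ j ∈ Finset.range k, if a j + s j < a k then q j else 0)
      - ∑ j ∈ Finset.range k, r j := by
  have hEv : ∀ᶠ u in nhdsWithin (a k) (Set.Iio (a k)), ∀ j ∈ Finset.range k,
      a j ≤ u ∧ ((a j + s j ≤ u) ↔ a j + s j < a k) := by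
    rw [Filter.eventually_all_finset]
    intro j hj
    have haj : a j < a k := ha (Finset.mem_range.1 hj)
    by_cases hr : a j + s j < a k
    · filter_upwards [Ioo_mem_nhdsLT_of_mem (⟨haj, le_rfl⟩ : a k ∈ Set.Ioc (a j) (a k)),
        Ioo_mem_nhdsLT_of_mem (⟨hr, le_rfl⟩ : a k ∈ Set.Ioc (a j + s j) (a k))] with u h1 h2
      exact ⟨h1.1.le, by simp [h2.1.le, hr]⟩
    · filter_upwards [Ioo_mem_nhdsLT_of_mem (⟨haj, le_rfl⟩ : a k ∈ Set.Ioc (a j) (a k))] with u h1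
      exact ⟨h1.1.le, ⟨fun h => (hr (lt_of_le_of_lt h h1.2)).elim, fun h => (hr h).elim⟩⟩
  have hEq : ∀ᶠ u in nhdsWithin (a k) (Set.Iio (a k)),
      F u = M₀ + D u + (∑ j ∈ Finset.range k, if a j + s j < a k then q j else 0)
        - ∑ j ∈ Finset.range k, r j := by
    filter_upwards [hEv, self_mem_nhdsWithin] with u hu hu2
    have hlt : u < a k := hu2
    rw [hF u]
    have e1 : (∑' j, if a j + s j ≤ u then q j else 0)
        = ∑ j ∈ Finset.range k, if a j + s j ≤ u then q j else 0 := by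
      refine tsum_ite_eq_sum_range fun j h => ha.lt_iff_lt.1 ?_
      have := hs j; linarith
    have e2 : (∑' j, if a j ≤ u then r j else 0)
        = ∑ j ∈ Finset.range k, if a j ≤ u then r j else 0 :=
      tsum_ite_eq_sum_range fun j h => ha.lt_iff_lt.1 (lt_of_le_of_lt h hlt)
    rw [e1, e2]
    congr 1
    · congr 1
      exact Finset.sum_congr rfl fun j hj => if_congr ((hu j hj).2) rfl rfl
    · exact Finset.sum_congr rfl fun j hj => if_pos (hu j hj).1
  have hD' : Tendsto D (nhdsWithin (a k) (Set.Iio (a k))) (nhds (D (a k))) :=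
    hDa.tendsto.mono_left nhdsWithin_le_nhds
  have hT : Tendsto (fun u => M₀ + D u
      + (∑ j ∈ Finset.range k, if a j + s j < a k then q j else 0)
      - ∑ j ∈ Finset.range k, r j) (nhdsWithin (a k) (Set.Iio (a k)))
      (nhds (M₀ + D (a k) + (∑ j ∈ Finset.range k, if a j + s j < a k then q j else 0)
      - ∑ j ∈ Finset.range k, r j)) :=
    ((tendsto_const_nhds.add hD').add tendsto_const_nhds).sub tendsto_const_nhds
  exact tendsto_nhds_unique hFl (hT.congr' (Filter.EventuallyEq.symm hEq))

/-- (Skorokhod approximation with full returns dominates realistic partial fulfillment.)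
With `M^{P*,R∞}(t) = M₀ + D(t) + Σ_j p_j b_j 𝟙{a_j+s_j ≤ t} − Σ_{a_j ≤ t} min(b_j, M^{P*,R∞}(a_j−))`
and `M^{P,R}(t) = M₀ + D(t) + Σ_j p_j min(b_j, M^{P,R}(a_j−)) 𝟙{a_j+s_j ≤ t}
 − Σ_{a_j ≤ t} min(b_j, M^{P,R}(a_j−))`, one has `M^{P*,R∞}(t) ≥ M^{P,R}(t)` for all `t ≥ 0`. -/
theorem skorokhod_full_returns_dominates_partial
    (M₀ : ℝ) (D : ℝ → ℝ) (a b p s : ℕ → ℝ)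
    (MPstar MPR : ℝ → ℝ) (MPstarleft MPRleft : ℕ → ℝ)
    (hM₀ : 0 ≤ M₀)
    (hDmono : Monotone D) (hD0 : D 0 = 0)
    (hDa : ∀ j, ContinuousAt D (a j))
    (ha : StrictMono a) (hapos : ∀ j, 0 < a j)
    (hainf : Tendsto a atTop atTop)
    (hb : ∀ j, 0 < b j) (hp0 : ∀ j, 0 ≤ p j) (hp1 : ∀ j, p j ≤ 1)
    (hs : ∀ j, 0 < s j)
    (hMPstarleft : ∀ j, Tendsto MPstar
      (nhdsWithin (a j) (Set.Iio (a j))) (nhds (MPstarleft j)))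
    (hMPRleft : ∀ j, Tendsto MPR
      (nhdsWithin (a j) (Set.Iio (a j))) (nhds (MPRleft j)))
    (hMPstar : ∀ t, MPstar t = M₀ + D t
      + (∑' j, if a j + s j ≤ t then p j * b j else 0)
      - ∑' j, if a j ≤ t then min (b j) (MPstarleft j) else 0)
    (hMPR : ∀ t, MPR t = M₀ + D t
      + (∑' j, if a j + s j ≤ t then p j * min (b j) (MPRleft j) else 0)
      - ∑' j, if a j ≤ t then min (b j) (MPRleft j) else 0) :
    ∀ t, 0 ≤ t → MPR t ≤ MPstar t := by
  set x : ℕ → ℝ := fun j => min (b j) (MPstarleft j) with hxdef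
  set y : ℕ → ℝ := fun j => min (b j) (MPRleft j) with hydef
  have key : ∀ k, ∀ t, 0 ≤ t → (∀ j, a j ≤ t → j < k) → MPR t ≤ MPstar t := by
    intro k
    induction k with
    | zero =>
      intro t ht hk
      have hret : ∀ j, a j + s j ≤ t → j < 0 := fun j h => hk j (by have := hs j; linarith)
      rw [hMPR t, hMPstar t,
        tsum_ite_eq_sum_range (f := fun j => p j * b j) hret,
        tsum_ite_eq_sum_range (f := fun j => p j * min (b j) (MPRleft j)) hret,
        tsum_ite_eq_sum_range (f := fun j => min (b j) (MPstarleft j)) hk,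
        tsum_ite_eq_sum_range (f := fun j => min (b j) (MPRleft j)) hk]
      simp
    | succ k IH =>
      intro t ht hk
      by_cases hcase : ∀ j, a j ≤ t → j < k
      · exact IH t ht hcase
      push_neg at hcase
      obtain ⟨j₀, hj₀t, hj₀k⟩ := hcase
      have hj₀ : j₀ = k := le_antisymm (Nat.lt_succ_iff.1 (hk j₀ hj₀t)) hj₀k
      have hak : a k ≤ t := hj₀ ▸ hj₀t
      -- left limits
      have hxl : MPstarleft k = M₀ + D (a k)
          + (∑ j ∈ Finset.range k, if a j + s j < a k then p j * b j else 0)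
          - ∑ j ∈ Finset.range k, x j :=
        left_limit_eq M₀ D a s (fun j => p j * b j) x MPstar (MPstarleft k) k ha hs (hDa k)
          hMPstar (hMPstarleft k)
      have hyl : MPRleft k = M₀ + D (a k)
          + (∑ j ∈ Finset.range k, if a j + s j < a k then p j * y j else 0)
          - ∑ j ∈ Finset.range k, y j :=
        left_limit_eq M₀ D a s (fun j => p j * y j) y MPR (MPRleft k) k ha hs (hDa k)
          hMPR (hMPRleft k)
      -- left limit domination from IH
      have hDelta : MPRleft k ≤ MPstarleft k := by
        refine le_of_tendsto_of_tendsto (hMPRleft k) (hMPstarleft k) ?_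
        filter_upwards [Ioo_mem_nhdsLT_of_mem (⟨hapos k, le_rfl⟩ : a k ∈ Set.Ioc 0 (a k))]
          with u hu
        exact IH u hu.1.le fun j hj => ha.lt_iff_lt.1 (lt_of_le_of_lt hj hu.2)
      -- rewrite goal with finite sums
      have hbound2 : ∀ j, a j + s j ≤ t → j < k + 1 :=
        fun j h => hk j (by have := hs j; linarith)
      rw [hMPR t, hMPstar t,
        tsum_ite_eq_sum_range (f := fun j => p j * b j) hbound2,
        tsum_ite_eq_sum_range (f := fun j => p j * min (b j) (MPRleft j)) hbound2,
        tsum_ite_eq_sum_range (f := fun j => min (b j) (MPstarleft j)) hk,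
        tsum_ite_eq_sum_range (f := fun j => min (b j) (MPRleft j)) hk]
      have harr1 : (∑ j ∈ Finset.range (k+1), if a j ≤ t then min (b j) (MPstarleft j) else 0)
          = ∑ j ∈ Finset.range (k+1), x j :=
        Finset.sum_congr rfl fun j hj =>
          if_pos ((ha.monotone (Nat.lt_succ_iff.1 (Finset.mem_range.1 hj))).trans hak)
      have harr2 : (∑ j ∈ Finset.range (k+1), if a j ≤ t then min (b j) (MPRleft j) else 0)
          = ∑ j ∈ Finset.range (k+1), y j :=
        Finset.sum_congr rfl fun j hj =>
          if_pos ((ha.monotone (Nat.lt_succ_iff.1 (Finset.mem_range.1 hj))).trans hak)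
      rw [harr1, harr2]
      -- nonnegativity of return gains
      have hc : ∀ j, 0 ≤ p j * (b j - y j) :=
        fun j => mul_nonneg (hp0 j) (sub_nonneg.2 (min_le_left _ _))
      -- (A) jump bound
      have hA : x k - y k ≤ MPstarleft k - MPRleft k := by
        simp only [hxdef, hydef, min_def]
        split_ifs <;> linarith
      -- (B) return-sum comparison
      have hTdiff : (∑ j ∈ Finset.range (k+1), if a j + s j ≤ t then p j * b j else 0)
          - (∑ j ∈ Finset.range (k+1), if a j + s j ≤ t then p j * min (b j) (MPRleft j) else 0)
          = ∑ j ∈ Finset.range (k+1), if a j + s j ≤ t then p j * (b j - y j) else 0 := by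
        rw [← Finset.sum_sub_distrib]
        exact Finset.sum_congr rfl fun j hj => by split_ifs <;> ring
      have hSdiff : (∑ j ∈ Finset.range k, if a j + s j < a k then p j * b j else 0)
          - (∑ j ∈ Finset.range k, if a j + s j < a k then p j * y j else 0)
          = ∑ j ∈ Finset.range k, if a j + s j < a k then p j * (b j - y j) else 0 := by
        rw [← Finset.sum_sub_distrib]
        exact Finset.sum_congr rfl fun j hj => by split_ifs <;> ring
      have hB : (∑ j ∈ Finset.range k, if a j + s j < a k then p j * (b j - y j) else 0)
          ≤ ∑ j ∈ Finset.range (k+1), if a j + s j ≤ t then p j * (b j - y j) else 0 := by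
        calc (∑ j ∈ Finset.range k, if a j + s j < a k then p j * (b j - y j) else 0)
            ≤ ∑ j ∈ Finset.range k, if a j + s j ≤ t then p j * (b j - y j) else 0 := by
              refine Finset.sum_le_sum fun j hj => ?_
              split_ifs with h1 h2 h2
              · exact le_rfl
              · exact absurd (h1.le.trans hak) h2
              · exact hc j
              · exact le_rfl
          _ ≤ ∑ j ∈ Finset.range (k+1), if a j + s j ≤ t then p j * (b j - y j) else 0 := by
              refine Finset.sum_le_sum_of_subset_of_nonneg
                (Finset.range_subset_range.2 k.le_succ) fun j _ _ => ?_
              split_ifs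
              · exact hc j
              · exact le_rfl
      rw [Finset.sum_range_succ (f := x), Finset.sum_range_succ (f := y)]
      have hmain : (∑ j ∈ Finset.range k, x j + x k) - (∑ j ∈ Finset.range k, y j + y k)
          ≤ (∑ j ∈ Finset.range (k+1), if a j + s j ≤ t then p j * b j else 0)
          - (∑ j ∈ Finset.range (k+1), if a j + s j ≤ t then p j * min (b j) (MPRleft j) else 0) := by
        rw [hTdiff]
        have h1 : MPstarleft k - MPRleft k
            = (∑ j ∈ Finset.range k, if a j + s j < a k then p j * b j else 0)
            - (∑ j ∈ Finset.range k, if a j + s j < a k then p j * y j else 0)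
            - (∑ j ∈ Finset.range k, x j - ∑ j ∈ Finset.range k, y j) := by
          rw [hxl, hyl]; ring
        linarith [hA, hB, hSdiff]
      linarith [hmain]
  intro t ht
  obtain ⟨N, hN⟩ := (hainf.eventually (eventually_gt_atTop t)).exists_forall_of_atTop
  exact key N t ht fun j hj => by
    by_contra h
    exact absurd hj (not_le.2 (hN j (not_lt.1 h)))
end
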